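/- arXiv:2009.14808 — 3 statements merged into one kernel-verified Lean document; each statement's English description precedes it below -/
import Mathlib

section
/- Let n ≥ 1 be an integer and d = 2^n. Let ψ ∈ ℂ^d be a unit vector, H a Hermitian d×d complex matrix, θ₀ ∈ ℝ, and let U : ℝ → M_d(ℂ) be a family of matrices such that U(θ) is unitary for every θ and θ ↦ U(θ) is (entrywise) differentiable at θ₀. For each unitary V define the cost C(θ, V) = ⟨ψ, U(θ)ᴴ V H Vᴴ U(θ) ψ⟩, and let g(V) be the derivative of θ ↦ C(θ, V) at θ₀. Then the average of the cost gradient over a Haar-random target unitary vanishes: ∫ g(V) dμ(V) = 0. -/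
/-!
By left invariance of `μ`, the Haar average `M = ∫ V H Vᴴ dμ(V)` satisfies `W M Wᴴ = M` for every
unitary `W`, so it commutes with all unitaries and is a scalar matrix `c • 1`. The gradient is
`g V = D (V H Vᴴ)` for a linear functional `D`, so `∫ g = c · D 1`, and `D 1 = 0` is the derivative
of the constant function `θ ↦ ⟨U(θ) ψ, U(θ) ψ⟩ = ⟨ψ, ψ⟩`.
-/

open MeasureTheory Matrix

noncomputable instance (d : ℕ) : MeasurableSpace (Matrix.unitaryGroup (Fin d) ℂ) := borel _
instance (d : ℕ) : BorelSpace (Matrix.unitaryGroup (Fin d) ℂ) := ⟨rfl⟩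

section UnitaryCommutant

variable {n : Type*} [Fintype n] [DecidableEq n]

theorem Matrix.permMatrix_mem_unitaryGroup {R : Type*} [CommRing R] [StarRing R]
    (σ : Equiv.Perm n) :
    σ.permMatrix R ∈ unitaryGroup n R := by
  rw [mem_unitaryGroup_iff', star_eq_conjTranspose, conjTranspose_permMatrix, ← permMatrix_mul,
    mul_inv_cancel, permMatrix_one]

theorem Matrix.one_sub_two_smul_single_mem_unitaryGroup {R : Type*} [CommRing R] [StarRing R]
    (i : n) :
    1 - (2 : R) • single i i 1 ∈ unitaryGroup n R := by
  rw [mem_unitaryGroup_iff', star_eq_conjTranspose, conjTranspose_sub, conjTranspose_one,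
    conjTranspose_smul, conjTranspose_single, star_one, star_ofNat]
  simp only [sub_mul, mul_sub, one_mul, mul_one, smul_mul_smul_comm, single_mul_single_same]
  module

theorem Matrix.single_mul_permMatrix_swap {R : Type*} [CommRing R] (i j : n) :
    single i i (1 : R) * (Equiv.swap i j).permMatrix R = single i j 1 := by
  ext a b
  obtain rfl | ha := eq_or_ne a i
  · simp [Equiv.Perm.permMatrix, PEquiv.toMatrix_apply, single_apply]
  · simp [ha, single_apply_of_row_ne ha.symm]

/-- Over a field of characteristic zero the unitaries span all matrices: `single i i 1` is
`(1 - D) / 2` for the unitary sign flip `D`, and `single i j 1` is `single i i 1` times a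
permutation matrix. -/
theorem Matrix.mem_range_scalar_of_forall_unitary_commute {𝕜 : Type*} [Field 𝕜] [CharZero 𝕜]
    [StarRing 𝕜] {M : Matrix n n 𝕜} (hM : ∀ W ∈ unitaryGroup n 𝕜, Commute W M) :
    M ∈ Set.range (scalar n) := by
  refine mem_range_scalar_of_commute_single fun i j _ => ?_
  have hdiag : single i i (1 : 𝕜) = (2 : 𝕜)⁻¹ • (1 - (1 - (2 : 𝕜) • single i i 1)) := by
    rw [sub_sub_cancel, smul_smul, inv_mul_cancel₀ two_ne_zero, one_smul]
  have hcomm : Commute (single i i (1 : 𝕜)) M := by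
    rw [hdiag]
    exact ((Commute.one_left M).sub_left
      (hM _ (one_sub_two_smul_single_mem_unitaryGroup i))).smul_left _
  show Commute (single i j 1) M
  rw [← single_mul_permMatrix_swap i j]
  exact hcomm.mul_left (hM _ (permMatrix_mem_unitaryGroup _))

end UnitaryCommutant

open scoped Matrix.Norms.L2Operator

section HaarAverage

variable {n : Type*} [Fintype n] [DecidableEq n] [MeasurableSpace (unitaryGroup n ℂ)]
  (μ : Measure (unitaryGroup n ℂ))

noncomputable def unitaryTwirl (H : Matrix n n ℂ) : Matrix n n ℂ :=
  ∫ V : unitaryGroup n ℂ, (V : Matrix n n ℂ) * H * (V : Matrix n n ℂ)ᴴ ∂μ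

variable [BorelSpace (unitaryGroup n ℂ)] [IsFiniteMeasure μ]

theorem integrable_unitary_conj (H : Matrix n n ℂ) :
    Integrable (fun V : unitaryGroup n ℂ => (V : Matrix n n ℂ) * H * (V : Matrix n n ℂ)ᴴ) μ := by
  refine .of_bound (by fun_prop) ‖H‖ (ae_of_all μ fun V => ?_)
  rw [← star_eq_conjTranspose, ← Unitary.coe_star, CStarRing.norm_mul_coe_unitary,
    CStarRing.norm_coe_unitary_mul]

variable [μ.IsMulLeftInvariant]

theorem unitary_conj_unitaryTwirl (H : Matrix n n ℂ) (W : unitaryGroup n ℂ) :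
    (W : Matrix n n ℂ) * unitaryTwirl μ H * (W : Matrix n n ℂ)ᴴ = unitaryTwirl μ H := by
  have hconj := (ContinuousLinearMap.mulLeftRight ℂ (Matrix n n ℂ) W (W : Matrix n n ℂ)ᴴ
    ).integral_comp_comm (integrable_unitary_conj μ H)
  simp only [ContinuousLinearMap.mulLeftRight_apply] at hconj
  rw [unitaryTwirl, ← hconj]
  simpa [conjTranspose_mul, mul_assoc] using integral_mul_left_eq_self
    (fun V : unitaryGroup n ℂ => (V : Matrix n n ℂ) * H * (V : Matrix n n ℂ)ᴴ) W

theorem unitaryTwirl_mem_range_scalar (H : Matrix n n ℂ) :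
    unitaryTwirl μ H ∈ Set.range (scalar n) := by
  refine mem_range_scalar_of_forall_unitary_commute fun W hW => ?_
  have hWW : Wᴴ * W = 1 := by
    rw [← star_eq_conjTranspose]
    exact mem_unitaryGroup_iff'.mp hW
  calc W * unitaryTwirl μ H = W * unitaryTwirl μ H * Wᴴ * W := by
        rw [mul_assoc _ Wᴴ, hWW, mul_one]
    _ = unitaryTwirl μ H * W := by rw [unitary_conj_unitaryTwirl μ H ⟨W, hW⟩]

end HaarAverage

section Derivative

variable {m n : Type*} [Fintype n] {θ₀ : ℝ}

theorem hasDerivAt_mulVec {U : ℝ → Matrix m n ℂ} {U' : Matrix m n ℂ}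
    (hU : ∀ i j, HasDerivAt (fun θ => U θ i j) (U' i j) θ₀) (ψ : n → ℂ) :
    HasDerivAt (fun θ => U θ *ᵥ ψ) (U' *ᵥ ψ) θ₀ :=
  hasDerivAt_pi.2 fun i => HasDerivAt.fun_sum fun j _ => (hU i j).mul_const (ψ j)

theorem HasDerivAt.star_dotProduct_mulVec [Fintype m] {v : ℝ → m → ℂ} {w : ℝ → n → ℂ}
    {v' : m → ℂ} {w' : n → ℂ} (hv : HasDerivAt v v' θ₀) (hw : HasDerivAt w w' θ₀)
    (X : Matrix m n ℂ) :
    HasDerivAt (fun θ => star (v θ) ⬝ᵥ X *ᵥ w θ)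
      (star v' ⬝ᵥ X *ᵥ w θ₀ + star (v θ₀) ⬝ᵥ X *ᵥ w') θ₀ := by
  have hXw : HasDerivAt (fun θ => X *ᵥ w θ) (X *ᵥ w') θ₀ :=
    hasDerivAt_pi.2 fun i => HasDerivAt.fun_sum fun j _ => (hasDerivAt_pi.1 hw j).const_mul (X i j)
  simpa [dotProduct, Finset.sum_add_distrib] using
    HasDerivAt.fun_sum fun i (_ : i ∈ Finset.univ) =>
      (hasDerivAt_pi.1 hv.star i).fun_mul (hasDerivAt_pi.1 hXw i)

theorem Matrix.star_dotProduct_conjTranspose_mul_mul_mulVec [Fintype m] {R : Type*} [CommSemiring R]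
    [StarRing R]     (U : Matrix m n R) (X : Matrix m m R) (ψ : n → R) :
    star ψ ⬝ᵥ (Uᴴ * X * U) *ᵥ ψ = star (U *ᵥ ψ) ⬝ᵥ X *ᵥ (U *ᵥ ψ) := by
  rw [← mulVec_mulVec, ← mulVec_mulVec, dotProduct_mulVec, star_mulVec]

theorem star_dotProduct_add_star_dotProduct_eq_zero_of_unitary [DecidableEq n]
    {U : ℝ → Matrix n n ℂ} (hU : ∀ θ, U θ ∈ unitaryGroup n ℂ) {ψ w' : n → ℂ}
    (hw : HasDerivAt (fun θ => U θ *ᵥ ψ) w' θ₀) :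
    star w' ⬝ᵥ U θ₀ *ᵥ ψ + star (U θ₀ *ᵥ ψ) ⬝ᵥ w' = 0 := by
  have hconst : (fun θ => star (U θ *ᵥ ψ) ⬝ᵥ (1 : Matrix n n ℂ) *ᵥ (U θ *ᵥ ψ)) =
      fun _ => star ψ ⬝ᵥ ψ := by
    ext θ
    rw [← star_dotProduct_conjTranspose_mul_mul_mulVec, mul_one, ← star_eq_conjTranspose,
      mem_unitaryGroup_iff'.mp (hU θ), one_mulVec]
  have h := hw.star_dotProduct_mulVec hw 1
  rw [hconst] at h
  simpa using ((hasDerivAt_const θ₀ _).unique h).symm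

end Derivative

section

variable {m n : Type*} [Fintype m] [Fintype n] [DecidableEq m] [DecidableEq n]

noncomputable def Matrix.dotProductMulVecCLM (u : m → ℂ) (v : n → ℂ) : Matrix m n ℂ →L[ℂ] ℂ :=
  (LinearMap.applyₗ v ∘ₗ LinearMap.applyₗ u ∘ₗ (toLinearMap₂' ℂ).toLinearMap).toContinuousLinearMap

@[simp]
theorem Matrix.dotProductMulVecCLM_apply (u : m → ℂ) (v : n → ℂ) (X : Matrix m n ℂ) :
    dotProductMulVecCLM u v X = u ⬝ᵥ X *ᵥ v :=
  toLinearMap₂'_apply' X u v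

end

theorem average_cost_gradient_vanishes_general (d : ℕ)
    (μ : Measure (Matrix.unitaryGroup (Fin d) ℂ)) [μ.IsHaarMeasure] [IsProbabilityMeasure μ]
    (ψ : Fin d → ℂ)
    (H : Matrix (Fin d) (Fin d) ℂ)
    (θ₀ : ℝ)
    (U : ℝ → Matrix (Fin d) (Fin d) ℂ)
    (hU : ∀ θ, U θ ∈ Matrix.unitaryGroup (Fin d) ℂ)
    (U' : Matrix (Fin d) (Fin d) ℂ)
    (hU' : ∀ i j, HasDerivAt (fun θ => U θ i j) (U' i j) θ₀)
    (g : Matrix.unitaryGroup (Fin d) ℂ → ℂ)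
    (hg : ∀ V : Matrix.unitaryGroup (Fin d) ℂ,
      HasDerivAt
        (fun θ => star ψ ⬝ᵥ ((U θ)ᴴ * (V : Matrix (Fin d) (Fin d) ℂ) * H *
            (V : Matrix (Fin d) (Fin d) ℂ)ᴴ * U θ) *ᵥ ψ)
        (g V) θ₀) :
    ∫ V : Matrix.unitaryGroup (Fin d) ℂ, g V ∂μ = 0 := by
  have hw := hasDerivAt_mulVec hU' ψ
  let D := dotProductMulVecCLM (star (U' *ᵥ ψ)) (U θ₀ *ᵥ ψ) +
    dotProductMulVecCLM (star (U θ₀ *ᵥ ψ)) (U' *ᵥ ψ)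
  have hgD (V : unitaryGroup (Fin d) ℂ) :
      g V = D ((V : Matrix (Fin d) (Fin d) ℂ) * H * (V : Matrix (Fin d) (Fin d) ℂ)ᴴ) := by
    refine (hg V).unique ?_
    have h := hw.star_dotProduct_mulVec hw
      ((V : Matrix (Fin d) (Fin d) ℂ) * H * (V : Matrix (Fin d) (Fin d) ℂ)ᴴ)
    simp only [← star_dotProduct_conjTranspose_mul_mul_mulVec, ← mul_assoc] at h
    exact h.congr_deriv (by simp [D])
  have hD1 : D 1 = 0 := by
    simpa [D] using star_dotProduct_add_star_dotProduct_eq_zero_of_unitary hU hw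
  obtain ⟨c, hc⟩ := unitaryTwirl_mem_range_scalar μ H
  simp_rw [hgD]
  rw [D.integral_comp_comm (integrable_unitary_conj μ H), ← unitaryTwirl, ← hc, scalar_apply,
    ← smul_one_eq_diagonal, map_smul, hD1, smul_zero]

/-- **Proposition 1 (vanishing average gradient).** Let `d = 2^n` (`n ≥ 1`), `ψ ∈ ℂ^d` a unit
vector, `H` Hermitian, and `θ ↦ U(θ)` a family of unitaries entrywise differentiable at `θ₀`.
For each unitary `V` let `g V` be the derivative at `θ₀` of the cost
`θ ↦ ⟨ψ, U(θ)ᴴ V H Vᴴ U(θ) ψ⟩`. Then the average of the gradient over a Haar-random target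
unitary `V` vanishes: `∫ g V dμ(V) = 0`. -/
theorem average_cost_gradient_vanishes (n : ℕ) (hn : 1 ≤ n) (d : ℕ) (hd : d = 2 ^ n)
    (μ : Measure (Matrix.unitaryGroup (Fin d) ℂ)) [μ.IsHaarMeasure] [IsProbabilityMeasure μ]
    (ψ : Fin d → ℂ) (hψ : star ψ ⬝ᵥ ψ = 1)
    (H : Matrix (Fin d) (Fin d) ℂ) (hH : H.IsHermitian)
    (θ₀ : ℝ)
    (U : ℝ → Matrix (Fin d) (Fin d) ℂ)
    (hU : ∀ θ, U θ ∈ Matrix.unitaryGroup (Fin d) ℂ)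
    (U' : Matrix (Fin d) (Fin d) ℂ)
    (hU' : ∀ i j, HasDerivAt (fun θ => U θ i j) (U' i j) θ₀)
    (g : Matrix.unitaryGroup (Fin d) ℂ → ℂ)
    (hg : ∀ V : Matrix.unitaryGroup (Fin d) ℂ,
      HasDerivAt
        (fun θ => star ψ ⬝ᵥ ((U θ)ᴴ * (V : Matrix (Fin d) (Fin d) ℂ) * H *
            (V : Matrix (Fin d) (Fin d) ℂ)ᴴ * U θ) *ᵥ ψ)
        (g V) θ₀) :
    ∫ V : Matrix.unitaryGroup (Fin d) ℂ, g V ∂μ = 0 :=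
  average_cost_gradient_vanishes_general d μ ψ H θ₀ U hU U' hU' g hg
end

section
/- Let d ≥ 1 and let A and B be arbitrary d×d complex matrices. Then the first-moment Haar integral satisfies ∫ Tr(V A Vᴴ B) dμ(V) = Tr(A) · Tr(B) / d. -/
open MeasureTheory Matrix

/-!
The average `T(A) = ∫ V A Vᴴ dμ(V)` commutes with every unitary by left invariance of `μ`.
Since the unitaries span all matrices, `T(A)` lies in the centre and is therefore a scalar,
which the trace identity `Tr T(A) = Tr A` pins down as `Tr A / d`. The integral in the theorem
is `Tr(T(A) B)`.
-/

-- The `L²` operator norm makes matrices a C⋆-algebra (so unitaries span it and have norm at most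
-- `‖1‖`), and its topology is the product topology used for the Haar measure.
open scoped Matrix.Norms.L2Operator

namespace Matrix

variable {n : Type*} [Fintype n] [DecidableEq n]

theorem eq_trace_div_card_smul_one_of_mem_range_scalar {K : Type*} [Field K] [CharZero K]
    {M : Matrix n n K} (hM : M ∈ Set.range (scalar n)) :
    M = (M.trace / Fintype.card n) • (1 : Matrix n n K) := by
  obtain ⟨c, rfl⟩ := hM
  cases isEmpty_or_nonempty n
  · exact Subsingleton.elim _ _
  rw [scalar_apply, ← smul_one_eq_diagonal, trace_smul, trace_one, smul_eq_mul,
    mul_div_cancel_right₀ _ (Nat.cast_ne_zero.2 Fintype.card_ne_zero)]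

theorem mem_range_scalar_of_forall_commute_unitary {M : Matrix n n ℂ}
    (hM : ∀ U ∈ unitaryGroup n ℂ, Commute U M) : M ∈ Set.range (scalar n) := by
  have hspan : Submodule.span ℂ (unitaryGroup n ℂ : Set (Matrix n n ℂ)) ≤
      Subalgebra.toSubmodule (Subalgebra.centralizer ℂ {M}) :=
    Submodule.span_le.2 fun U hU =>
      (Subalgebra.mem_centralizer_iff ℂ).2 fun _ hM' => hM' ▸ (hM U hU).eq.symm
  refine mem_range_scalar_of_commute_single fun i j _ => ?_
  have hsingle := hspan <| (CStarAlgebra.span_unitary (Matrix n n ℂ)).ge <|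
    Submodule.mem_top (x := single i j 1)
  exact ((Subalgebra.mem_centralizer_iff ℂ).1 hsingle M rfl).symm

instance : CompactSpace (unitaryGroup n ℂ) :=
  isCompact_iff_compactSpace.mp <| Metric.isCompact_of_isClosed_isBounded isClosed_unitary <|
    (Metric.isBounded_closedBall (r := ‖(1 : Matrix n n ℂ)‖)).subset fun U hU =>
      mem_closedBall_zero_iff.2 (one_mul U ▸ CStarRing.norm_mul_mem_unitary 1 hU).le

variable [MeasurableSpace (unitaryGroup n ℂ)] [BorelSpace (unitaryGroup n ℂ)]
  (μ : Measure (unitaryGroup n ℂ)) (A : Matrix n n ℂ)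

noncomputable def unitaryTwirl : Matrix n n ℂ :=
  ∫ V, (V : Matrix n n ℂ) * A * (V : Matrix n n ℂ)ᴴ ∂μ

theorem integrable_unitary_conj [IsFiniteMeasure μ] :
    Integrable (fun V : unitaryGroup n ℂ => V * A * (V : Matrix n n ℂ)ᴴ) μ :=
  Continuous.integrable_of_hasCompactSupport (by fun_prop) (HasCompactSupport.of_compactSpace _)

theorem mul_unitaryTwirl_mul_conjTranspose [μ.IsMulLeftInvariant] [IsFiniteMeasure μ]
    (U : unitaryGroup n ℂ) :
    (U : Matrix n n ℂ) * unitaryTwirl μ A * (U : Matrix n n ℂ)ᴴ = unitaryTwirl μ A := by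
  let f (V : unitaryGroup n ℂ) : Matrix n n ℂ := V * A * (V : Matrix n n ℂ)ᴴ
  let L :=
    (LinearMap.mulLeftRight ℂ ((U : Matrix n n ℂ), (U : Matrix n n ℂ)ᴴ)).toContinuousLinearMap
  calc (U : Matrix n n ℂ) * unitaryTwirl μ A * (U : Matrix n n ℂ)ᴴ
      = L (∫ V, f V ∂μ) := rfl
    _ = ∫ V, L (f V) ∂μ := (L.integral_comp_comm (integrable_unitary_conj μ A)).symm
    _ = ∫ V, f (U * V) ∂μ := by simp [f, L, conjTranspose_mul, Matrix.mul_assoc]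
    _ = unitaryTwirl μ A := integral_mul_left_eq_self f U

theorem commute_unitaryTwirl [μ.IsMulLeftInvariant] [IsFiniteMeasure μ] (U : unitaryGroup n ℂ) :
    Commute (U : Matrix n n ℂ) (unitaryTwirl μ A) := by
  calc (U : Matrix n n ℂ) * unitaryTwirl μ A
      = (U : Matrix n n ℂ) * unitaryTwirl μ A * ((U : Matrix n n ℂ)ᴴ * U) := by
        rw [← star_eq_conjTranspose, UnitaryGroup.star_mul_self, Matrix.mul_one]
    _ = unitaryTwirl μ A * U := by
        rw [← Matrix.mul_assoc, mul_unitaryTwirl_mul_conjTranspose]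

theorem trace_unitaryTwirl [IsProbabilityMeasure μ] : (unitaryTwirl μ A).trace = A.trace := by
  calc (unitaryTwirl μ A).trace
      = ∫ V, ((V : Matrix n n ℂ) * A * (V : Matrix n n ℂ)ᴴ).trace ∂μ :=
        ((traceLinearMap n ℂ ℂ).toContinuousLinearMap.integral_comp_comm
          (integrable_unitary_conj μ A)).symm
    _ = ∫ _, A.trace ∂μ := by
        congr 1 with V
        rw [trace_mul_comm, ← Matrix.mul_assoc, ← star_eq_conjTranspose,
          UnitaryGroup.star_mul_self, Matrix.one_mul]
    _ = A.trace := by simp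

theorem unitaryTwirl_eq_trace_div_card_smul_one [μ.IsMulLeftInvariant]
    [IsProbabilityMeasure μ] :
    unitaryTwirl μ A = (A.trace / Fintype.card n) • (1 : Matrix n n ℂ) := by
  rw [← trace_unitaryTwirl μ A]
  exact eq_trace_div_card_smul_one_of_mem_range_scalar <|
    mem_range_scalar_of_forall_commute_unitary fun U hU => commute_unitaryTwirl μ A ⟨U, hU⟩

theorem integral_trace_conj_mul [IsFiniteMeasure μ] (B : Matrix n n ℂ) :
    ∫ V, ((V : Matrix n n ℂ) * A * (V : Matrix n n ℂ)ᴴ * B).trace ∂μ =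
      (unitaryTwirl μ A * B).trace :=
  (traceLinearMap n ℂ ℂ ∘ₗ LinearMap.mulRight ℂ B).toContinuousLinearMap.integral_comp_comm
    (integrable_unitary_conj μ A)

end Matrix

theorem first_moment_haar_integral_general (d : ℕ)
    (μ : Measure (Matrix.unitaryGroup (Fin d) ℂ)) [μ.IsHaarMeasure] [IsProbabilityMeasure μ]
    (A B : Matrix (Fin d) (Fin d) ℂ) :
    ∫ V : Matrix.unitaryGroup (Fin d) ℂ,
        ((V : Matrix (Fin d) (Fin d) ℂ) * A * (V : Matrix (Fin d) (Fin d) ℂ)ᴴ * B).trace ∂μ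
      = A.trace * B.trace / (d : ℂ) := by
  rw [integral_trace_conj_mul, unitaryTwirl_eq_trace_div_card_smul_one, smul_mul, Matrix.one_mul,
    trace_smul, Fintype.card_fin, smul_eq_mul, div_mul_eq_mul_div]

/-- **First-moment Haar integral.** For any `d × d` complex matrices `A` and `B`, and `μ` the
normalized Haar probability measure on the unitary group `U(d)`,
`∫ Tr(V A Vᴴ B) dμ(V) = Tr(A) Tr(B) / d`. -/
theorem first_moment_haar_integral (d : ℕ) (hd : 1 ≤ d)
    (μ : Measure (Matrix.unitaryGroup (Fin d) ℂ)) [μ.IsHaarMeasure] [IsProbabilityMeasure μ]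
    (A B : Matrix (Fin d) (Fin d) ℂ) :
    ∫ V : Matrix.unitaryGroup (Fin d) ℂ,
        ((V : Matrix (Fin d) (Fin d) ℂ) * A * (V : Matrix (Fin d) (Fin d) ℂ)ᴴ * B).trace ∂μ
      = A.trace * B.trace / (d : ℂ) :=
  first_moment_haar_integral_general d μ A B
end

section
/- Let n ≥ 1, d_S = 2^n, and d_D, d_R ≥ 1, and index the Hilbert space ℂ^{d_S} ⊗ ℂ^{d_D} ⊗ ℂ^{d_R} by triples (s, e, r). Let (p_i) be finitely many nonnegative reals summing to 1, let each Ψ_i be a unit vector in ℂ^{d_S} ⊗ ℂ^{d_D} ⊗ ℂ^{d_R}, and let each H_i be a Hermitian matrix on ℂ^{d_S} ⊗ ℂ^{d_R}, extended to H̃_i on the full space by (H̃_i)_{(s,e,r),(s',e',r')} = (H_i)_{(s,r),(s',r')} · δ_{e e'}. Let θ ↦ U(θ) be a family of unitary matrices on ℂ^{d_S} ⊗ ℂ^{d_D}, entrywise differentiable at θ₀ ∈ ℝ, extended to Ũ(θ) on the full space by (Ũ(θ))_{(s,e,r),(s',e',r')} = (U(θ))_{(s,e),(s',e')} · δ_{r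 r'}. For a d_S×d_S unitary V let Ṽ = V ⊗ I_{d_D} ⊗ I_{d_R} and define the generalized cost C_gen(θ, V) = Σ_i p_i ⟨Ψ_i, Ũ(θ)ᴴ Ṽ H̃_i Ṽᴴ Ũ(θ) Ψ_i⟩, and let g(V) be its derivative in θ at θ₀. Then the Haar average of the gradient vanishes: ∫ g(V) dμ(V) = 0, where μ is the normalized Haar probability measure on the d_S×d_S unitary group. -/
/-!
Differentiating the cost gives `g V = Σ p_i (⟨Ũ'Ψ_i, M_V ŨΨ_i⟩ + ⟨ŨΨ_i, M_V Ũ'Ψ_i⟩)` with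
`M_V = Ṽ H̃_i Ṽᴴ`, linear in the entries of `M_V`. Left invariance of the Haar measure under
permutation matrices and under sign matrices `diag(±1)` gives the first moments
`∫ V_{ia} conj V_{jb} dμ = δ_{ij} δ_{ab} / d_S`, so the Haar average of `M_V` is
`T_i = I_S ⊗ I_D ⊗ Tr_S(H_i) / d_S`. It commutes with every extended ansatz matrix, so the
averaged gradient is `Σ p_i ⟨Ψ_i, (Ũ'ᴴŨ + ŨᴴŨ') T_i Ψ_i⟩`, and `Ũ'ᴴŨ + ŨᴴŨ' = 0` is the
derivative of `ŨᴴŨ = 1`.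
-/

open MeasureTheory Matrix
open scoped Kronecker

/-- Extension of a measurement operator `H` on `ℂ^{d_S} ⊗ ℂ^{d_R}` to the full space
`ℂ^{d_S} ⊗ ℂ^{d_D} ⊗ ℂ^{d_R}`: `(H̃)_{(s,e,r),(s',e',r')} = H_{(s,r),(s',r')} δ_{e e'}`. -/
noncomputable def extMeas (dS dD dR : ℕ)
    (H : Matrix (Fin dS × Fin dR) (Fin dS × Fin dR) ℂ) :
    Matrix (Fin dS × Fin dD × Fin dR) (Fin dS × Fin dD × Fin dR) ℂ :=
  Matrix.of fun p q => H (p.1, p.2.2) (q.1, q.2.2) * (if p.2.1 = q.2.1 then 1 else 0)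

/-- Extension of an ansatz unitary `U` on `ℂ^{d_S} ⊗ ℂ^{d_D}` to the full space
`ℂ^{d_S} ⊗ ℂ^{d_D} ⊗ ℂ^{d_R}`: `(Ũ)_{(s,e,r),(s',e',r')} = U_{(s,e),(s',e')} δ_{r r'}`. -/
noncomputable def extAnsatz (dS dD dR : ℕ)
    (U : Matrix (Fin dS × Fin dD) (Fin dS × Fin dD) ℂ) :
    Matrix (Fin dS × Fin dD × Fin dR) (Fin dS × Fin dD × Fin dR) ℂ :=
  Matrix.of fun p q => U (p.1, p.2.1) (q.1, q.2.1) * (if p.2.2 = q.2.2 then 1 else 0)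

namespace Matrix

variable {n : Type*} [Fintype n] [DecidableEq n]

theorem permMatrix_mem_unitaryGroup_s8 (σ : Equiv.Perm n) :
    σ.permMatrix ℂ ∈ unitaryGroup n ℂ := by
  rw [mem_unitaryGroup_iff', star_eq_conjTranspose, conjTranspose_permMatrix, ← permMatrix_mul,
    mul_inv_cancel, permMatrix_one]

theorem diagonal_mem_unitaryGroup {w : n → ℂ} (hw : ∀ k, star (w k) * w k = 1) :
    diagonal w ∈ unitaryGroup n ℂ := by
  rw [mem_unitaryGroup_iff', star_eq_conjTranspose, diagonal_conjTranspose, diagonal_mul_diagonal]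
  simp only [Pi.star_apply, hw, diagonal_one]

theorem sum_apply_mul_star_apply_of_mem_unitaryGroup {V : Matrix n n ℂ}
    (hV : V ∈ unitaryGroup n ℂ) (a b : n) :
    ∑ i, V i a * star (V i b) = if a = b then 1 else 0 := by
  have h := congr_fun (congr_fun hV.1 b) a
  simp only [mul_apply, star_apply, one_apply] at h
  simp_rw [mul_comm (V _ a), h, eq_comm]

end Matrix

section HaarMoments

variable {n : Type*} [Fintype n] [DecidableEq n] [MeasurableSpace (unitaryGroup n ℂ)]
  [BorelSpace (unitaryGroup n ℂ)] (μ : Measure (unitaryGroup n ℂ))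

theorem integrable_apply_mul_star_apply [IsFiniteMeasure μ] (i a j b : n) :
    Integrable (fun V : unitaryGroup n ℂ =>
      (V : Matrix n n ℂ) i a * star ((V : Matrix n n ℂ) j b)) μ := by
  have hentry (i a : n) : Continuous fun V : unitaryGroup n ℂ => (V : Matrix n n ℂ) i a :=
    (continuous_apply_apply i a).comp continuous_subtype_val
  refine Integrable.of_bound ((hentry i a).mul (hentry j b).star).aestronglyMeasurable 1
    (ae_of_all _ fun V => ?_)
  rw [norm_mul, norm_star]
  exact mul_le_one₀ (entry_norm_bound_of_unitary V.2 i a) (norm_nonneg _)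
    (entry_norm_bound_of_unitary V.2 j b)

variable [μ.IsMulLeftInvariant]

theorem integral_apply_mul_star_apply_perm (σ : Equiv.Perm n) (i a j b : n) :
    ∫ V : unitaryGroup n ℂ, (V : Matrix n n ℂ) (σ i) a * star ((V : Matrix n n ℂ) (σ j) b) ∂μ =
      ∫ V : unitaryGroup n ℂ, (V : Matrix n n ℂ) i a * star ((V : Matrix n n ℂ) j b) ∂μ := by
  conv_rhs => rw [← integral_mul_left_eq_self _
    (⟨_, permMatrix_mem_unitaryGroup_s8 σ⟩ : unitaryGroup n ℂ)]
  simp [PEquiv.toMatrix_toPEquiv_mul]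

theorem integral_apply_mul_star_apply_diagonal {w : n → ℂ} (hw : ∀ k, star (w k) * w k = 1)
    (i a j b : n) :
    w i * star (w j) *
        ∫ V : unitaryGroup n ℂ, (V : Matrix n n ℂ) i a * star ((V : Matrix n n ℂ) j b) ∂μ =
      ∫ V : unitaryGroup n ℂ, (V : Matrix n n ℂ) i a * star ((V : Matrix n n ℂ) j b) ∂μ := by
  conv_rhs => rw [← integral_mul_left_eq_self _
    (⟨_, diagonal_mem_unitaryGroup hw⟩ : unitaryGroup n ℂ)]
  rw [← integral_const_mul]
  congr 1 with V
  simp only [Submonoid.coe_mul, diagonal_mul, star_mul']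
  ring

theorem integral_apply_mul_star_apply [IsProbabilityMeasure μ] (i a j b : n) :
    ∫ V : unitaryGroup n ℂ, (V : Matrix n n ℂ) i a * star ((V : Matrix n n ℂ) j b) ∂μ =
      if i = j ∧ a = b then (Fintype.card n : ℂ)⁻¹ else 0 := by
  by_cases hij : i = j
  · subst hij
    have hrow : ∀ i', ∫ V : unitaryGroup n ℂ,
        (V : Matrix n n ℂ) i' a * star ((V : Matrix n n ℂ) i' b) ∂μ =
          ∫ V : unitaryGroup n ℂ, (V : Matrix n n ℂ) i a * star ((V : Matrix n n ℂ) i b) ∂μ :=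
      fun i' => by simpa using integral_apply_mul_star_apply_perm μ (Equiv.swap i i') i a i b
    have hsum : (Fintype.card n : ℂ) *
        ∫ V : unitaryGroup n ℂ, (V : Matrix n n ℂ) i a * star ((V : Matrix n n ℂ) i b) ∂μ =
          if a = b then 1 else 0 := by
      calc _ = ∑ i', ∫ V : unitaryGroup n ℂ,
              (V : Matrix n n ℂ) i' a * star ((V : Matrix n n ℂ) i' b) ∂μ := by
            rw [Finset.sum_congr rfl fun i' _ => hrow i', Finset.sum_const, Finset.card_univ,
              nsmul_eq_mul]
        _ = ∫ V : unitaryGroup n ℂ,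
              ∑ i', (V : Matrix n n ℂ) i' a * star ((V : Matrix n n ℂ) i' b) ∂μ :=
            (integral_finsetSum _ fun i' _ => integrable_apply_mul_star_apply μ i' a i' b).symm
        _ = if a = b then 1 else 0 := by
            rw [integral_congr_ae (ae_of_all _ fun V : unitaryGroup n ℂ =>
              sum_apply_mul_star_apply_of_mem_unitaryGroup V.2 a b)]
            split_ifs <;> simp
    have : Nonempty n := ⟨i⟩
    have hcard : (Fintype.card n : ℂ) ≠ 0 := Nat.cast_ne_zero.mpr Fintype.card_ne_zero
    rw [← inv_mul_cancel_left₀ hcard (∫ V : unitaryGroup n ℂ, _ ∂μ), hsum]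
    split_ifs <;> simp_all
  · have h := integral_apply_mul_star_apply_diagonal μ (w := fun k => if k = i then -1 else 1)
      (fun k => by split_ifs <;> simp) i a j b
    simp only [if_pos, if_neg (Ne.symm hij), star_one, mul_one, neg_one_mul] at h
    simp only [hij, false_and, if_false]
    linear_combination -h / 2

end HaarMoments

namespace Matrix

variable {m n : Type*} [Fintype m] [Fintype n]

theorem star_dotProduct_conjTranspose_mul_mul_mulVec_s8 (A B : Matrix n m ℂ) (M : Matrix n n ℂ)
    (ψ : m → ℂ) :
    star ψ ⬝ᵥ ((Bᴴ * M * A) *ᵥ ψ) = star (B *ᵥ ψ) ⬝ᵥ (M *ᵥ (A *ᵥ ψ)) := by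
  rw [← mulVec_mulVec, ← mulVec_mulVec, dotProduct_mulVec, star_mulVec]

theorem star_mulVec_dotProduct_mulVec_add_eq_zero {A A' T : Matrix n n ℂ}
    (hA : Commute T A) (hA' : Commute T A') (hskew : A'ᴴ * A + Aᴴ * A' = 0) (ψ : n → ℂ) :
    star (A' *ᵥ ψ) ⬝ᵥ (T *ᵥ (A *ᵥ ψ)) + star (A *ᵥ ψ) ⬝ᵥ (T *ᵥ (A' *ᵥ ψ)) = 0 := by
  rw [← star_dotProduct_conjTranspose_mul_mul_mulVec_s8,
    ← star_dotProduct_conjTranspose_mul_mul_mulVec_s8,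
    ← dotProduct_add, ← add_mulVec, Matrix.mul_assoc, Matrix.mul_assoc, hA.eq, hA'.eq,
    ← Matrix.mul_assoc, ← Matrix.mul_assoc, ← add_mul, hskew, zero_mul, zero_mulVec,
    dotProduct_zero]

end Matrix

section Derivatives

variable {m n : Type*} [Fintype m] {θ₀ : ℝ}

theorem hasDerivAt_star_dotProduct {v w : ℝ → m → ℂ} {v' w' : m → ℂ}
    (hv : ∀ a, HasDerivAt (fun θ => v θ a) (v' a) θ₀)
    (hw : ∀ a, HasDerivAt (fun θ => w θ a) (w' a) θ₀) :
    HasDerivAt (fun θ => star (v θ) ⬝ᵥ w θ) (star v' ⬝ᵥ w θ₀ + star (v θ₀) ⬝ᵥ w') θ₀ := by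
  simp only [dotProduct, Pi.star_apply, ← Finset.sum_add_distrib]
  exact HasDerivAt.fun_sum fun a _ => (hv a).star.mul (hw a)

theorem hasDerivAt_mulVec_apply {A : ℝ → Matrix n m ℂ} {A' : Matrix n m ℂ}
    (hA : ∀ i j, HasDerivAt (fun θ => A θ i j) (A' i j) θ₀) (ψ : m → ℂ) (i : n) :
    HasDerivAt (fun θ => (A θ *ᵥ ψ) i) ((A' *ᵥ ψ) i) θ₀ :=
  HasDerivAt.fun_sum fun j _ => (hA i j).mul_const (ψ j)

theorem hasDerivAt_star_dotProduct_conjTranspose_mul_mul_mulVec [Fintype n] {A : ℝ → Matrix n m ℂ}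
    {A' : Matrix n m ℂ} (hA : ∀ i j, HasDerivAt (fun θ => A θ i j) (A' i j) θ₀)
    (M : Matrix n n ℂ) (ψ : m → ℂ) :
    HasDerivAt (fun θ => star ψ ⬝ᵥ (((A θ)ᴴ * M * A θ) *ᵥ ψ))
      (star (A' *ᵥ ψ) ⬝ᵥ (M *ᵥ (A θ₀ *ᵥ ψ)) + star (A θ₀ *ᵥ ψ) ⬝ᵥ (M *ᵥ (A' *ᵥ ψ))) θ₀ := by
  simp only [Matrix.star_dotProduct_conjTranspose_mul_mul_mulVec_s8]
  have hMA (a : n) : HasDerivAt (fun θ => (M *ᵥ (A θ *ᵥ ψ)) a) ((M *ᵥ (A' *ᵥ ψ)) a) θ₀ :=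
    HasDerivAt.fun_sum fun b _ => (hasDerivAt_mulVec_apply hA ψ b).const_mul (M a b)
  exact hasDerivAt_star_dotProduct (hasDerivAt_mulVec_apply hA ψ) hMA

theorem conjTranspose_mul_add_conjTranspose_mul_eq_zero [DecidableEq m]
    {U : ℝ → Matrix m m ℂ} {U' : Matrix m m ℂ} (hU : ∀ θ, U θ ∈ unitaryGroup m ℂ)
    (hU' : ∀ i j, HasDerivAt (fun θ => U θ i j) (U' i j) θ₀) :
    U'ᴴ * U θ₀ + (U θ₀)ᴴ * U' = 0 := by
  ext i j
  have hconst : (fun θ => ((U θ)ᴴ * U θ) i j) = fun _ => (1 : Matrix m m ℂ) i j := by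
    funext θ
    rw [← star_eq_conjTranspose, (hU θ).1]
  have hderiv : HasDerivAt (fun θ => ((U θ)ᴴ * U θ) i j) ((U'ᴴ * U θ₀ + (U θ₀)ᴴ * U') i j) θ₀ :=
    hasDerivAt_star_dotProduct (fun k => hU' k i) (fun k => hU' k j)
  rw [hconst] at hderiv
  exact hderiv.unique (hasDerivAt_const _ _)

end Derivatives

section BilinearIntegral

variable {X m n : Type*} [MeasurableSpace X] [Fintype m] [Fintype n] {μ : Measure X}
  {f : X → Matrix m n ℂ}

theorem integrable_dotProduct_mulVec (hf : ∀ a b, Integrable (fun x => f x a b) μ)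
    (u : m → ℂ) (v : n → ℂ) : Integrable (fun x => u ⬝ᵥ (f x *ᵥ v)) μ :=
  integrable_finsetSum _ fun a _ => (integrable_finsetSum _ fun b _ =>
    (hf a b).mul_const (v b)).const_mul (u a)

theorem integral_dotProduct_mulVec (hf : ∀ a b, Integrable (fun x => f x a b) μ)
    (u : m → ℂ) (v : n → ℂ) :
    ∫ x, u ⬝ᵥ (f x *ᵥ v) ∂μ = u ⬝ᵥ ((of fun a b => ∫ x, f x a b ∂μ) *ᵥ v) := by
  simp only [dotProduct, mulVec, of_apply]
  rw [integral_finsetSum _ fun a _ => (integrable_finsetSum _ fun b _ =>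
    (hf a b).mul_const (v b)).const_mul (u a)]
  refine Finset.sum_congr rfl fun a _ => ?_
  rw [integral_const_mul, integral_finsetSum _ fun b _ => (hf a b).mul_const (v b)]
  simp only [integral_mul_const]

end BilinearIntegral

namespace Matrix

variable {m κ R : Type*} [Fintype m]

def traceFst [AddCommMonoid R] (M : Matrix (m × κ) (m × κ) R) : Matrix κ κ R :=
  of fun x y => ∑ s, M (s, x) (s, y)

theorem kronecker_one_mul_mul_conjTranspose_apply [Fintype κ] [DecidableEq κ]
    (V : Matrix m m ℂ) (M : Matrix (m × κ) (m × κ) ℂ) (i j : m) (x y : κ) :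
    ((V ⊗ₖ (1 : Matrix κ κ ℂ)) * M * (V ⊗ₖ (1 : Matrix κ κ ℂ))ᴴ) (i, x) (j, y) =
      ∑ s, ∑ t, M (s, x) (t, y) * (V i s * star (V j t)) := by
  simp only [mul_apply, conjTranspose_apply, kroneckerMap_apply, one_apply, Fintype.sum_prod_type,
    mul_ite, ite_mul, mul_zero, zero_mul, mul_one, star_zero, apply_ite (star : ℂ → ℂ),
    Finset.sum_ite_eq, Finset.mem_univ, if_true, Finset.sum_mul]
  rw [Finset.sum_comm]
  exact Finset.sum_congr rfl fun _ _ => Finset.sum_congr rfl fun _ _ => by ring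

end Matrix

section Twirl

variable {n κ : Type*} [Fintype n] [DecidableEq n] [Fintype κ] [DecidableEq κ]
  [MeasurableSpace (unitaryGroup n ℂ)] [BorelSpace (unitaryGroup n ℂ)]
  (μ : Measure (unitaryGroup n ℂ))

noncomputable def haarTwirl (M : Matrix (n × κ) (n × κ) ℂ) : Matrix (n × κ) (n × κ) ℂ :=
  of fun a b => ∫ V : unitaryGroup n ℂ,
    (((V : Matrix n n ℂ) ⊗ₖ (1 : Matrix κ κ ℂ)) * M * ((V : Matrix n n ℂ) ⊗ₖ (1 : Matrix κ κ ℂ))ᴴ :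
      Matrix (n × κ) (n × κ) ℂ) a b ∂μ

theorem integrable_kronecker_one_mul_mul_conjTranspose_apply [IsFiniteMeasure μ]
    (M : Matrix (n × κ) (n × κ) ℂ) (a b : n × κ) :
    Integrable (fun V : unitaryGroup n ℂ =>
      (((V : Matrix n n ℂ) ⊗ₖ (1 : Matrix κ κ ℂ)) * M *
        ((V : Matrix n n ℂ) ⊗ₖ (1 : Matrix κ κ ℂ))ᴴ : Matrix (n × κ) (n × κ) ℂ) a b) μ := by
  obtain ⟨i, x⟩ := a
  obtain ⟨j, y⟩ := b
  simp only [kronecker_one_mul_mul_conjTranspose_apply]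
  exact integrable_finsetSum _ fun s _ => integrable_finsetSum _ fun t _ =>
    (integrable_apply_mul_star_apply μ _ _ _ _).const_mul _

theorem haarTwirl_eq [μ.IsMulLeftInvariant] [IsProbabilityMeasure μ]
    (M : Matrix (n × κ) (n × κ) ℂ) :
    haarTwirl μ M = (Fintype.card n : ℂ)⁻¹ • ((1 : Matrix n n ℂ) ⊗ₖ M.traceFst) := by
  ext ⟨i, x⟩ ⟨j, y⟩
  simp only [haarTwirl, of_apply, kronecker_one_mul_mul_conjTranspose_apply]
  rw [integral_finsetSum _ fun s _ => integrable_finsetSum _ fun t _ =>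
    (integrable_apply_mul_star_apply μ _ _ _ _).const_mul _]
  simp_rw [integral_finsetSum _ fun t _ =>
    (integrable_apply_mul_star_apply μ _ _ _ _).const_mul _, integral_const_mul,
    integral_apply_mul_star_apply]
  by_cases hij : i = j <;>
    simp [hij, traceFst, one_apply, Finset.mul_sum, mul_comm]

theorem integrable_dotProduct_kronecker_one_mul_mul_conjTranspose_mulVec [IsFiniteMeasure μ]
    (M : Matrix (n × κ) (n × κ) ℂ) (u v : n × κ → ℂ) :
    Integrable (fun V : unitaryGroup n ℂ =>
      u ⬝ᵥ ((((V : Matrix n n ℂ) ⊗ₖ (1 : Matrix κ κ ℂ)) * M *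
        ((V : Matrix n n ℂ) ⊗ₖ (1 : Matrix κ κ ℂ))ᴴ) *ᵥ v)) μ :=
  integrable_dotProduct_mulVec (integrable_kronecker_one_mul_mul_conjTranspose_apply μ M) u v

theorem integral_dotProduct_kronecker_one_mul_mul_conjTranspose_mulVec [IsFiniteMeasure μ]
    (M : Matrix (n × κ) (n × κ) ℂ) (u v : n × κ → ℂ) :
    ∫ V : unitaryGroup n ℂ, u ⬝ᵥ ((((V : Matrix n n ℂ) ⊗ₖ (1 : Matrix κ κ ℂ)) * M *
        ((V : Matrix n n ℂ) ⊗ₖ (1 : Matrix κ κ ℂ))ᴴ) *ᵥ v) ∂μ = u ⬝ᵥ (haarTwirl μ M *ᵥ v) :=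
  integral_dotProduct_mulVec (integrable_kronecker_one_mul_mul_conjTranspose_apply μ M) u v

end Twirl

section Extensions

variable {dS dD dR : ℕ}

theorem extAnsatz_add (A B : Matrix (Fin dS × Fin dD) (Fin dS × Fin dD) ℂ) :
    extAnsatz dS dD dR (A + B) = extAnsatz dS dD dR A + extAnsatz dS dD dR B := by
  ext p q
  simp only [extAnsatz, Matrix.add_apply, of_apply, add_mul]

theorem extAnsatz_zero : extAnsatz dS dD dR 0 = 0 := by
  ext p q
  simp [extAnsatz]

theorem extAnsatz_mul (A B : Matrix (Fin dS × Fin dD) (Fin dS × Fin dD) ℂ) :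
    extAnsatz dS dD dR (A * B) = extAnsatz dS dD dR A * extAnsatz dS dD dR B := by
  ext p q
  simp only [extAnsatz, of_apply, mul_apply, Fintype.sum_prod_type, mul_ite, ite_mul, mul_zero,
    zero_mul, mul_one, Finset.sum_ite_eq', Finset.mem_univ, if_true]
  by_cases h : p.2.2 = q.2.2 <;> simp [h]

theorem extAnsatz_conjTranspose (A : Matrix (Fin dS × Fin dD) (Fin dS × Fin dD) ℂ) :
    (extAnsatz dS dD dR A)ᴴ = extAnsatz dS dD dR Aᴴ := by
  ext p q
  simp only [extAnsatz, conjTranspose_apply, of_apply, star_mul', apply_ite (star : ℂ → ℂ),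
    star_one, star_zero, eq_comm (a := q.2.2), mul_comm]

theorem commute_extAnsatz_one_kronecker_one_kronecker
    (A : Matrix (Fin dS × Fin dD) (Fin dS × Fin dD) ℂ) (K : Matrix (Fin dR) (Fin dR) ℂ) :
    Commute (extAnsatz dS dD dR A)
      ((1 : Matrix (Fin dS) (Fin dS) ℂ) ⊗ₖ ((1 : Matrix (Fin dD) (Fin dD) ℂ) ⊗ₖ K)) := by
  ext p q
  simp only [extAnsatz, of_apply, mul_apply, kroneckerMap_apply, one_apply, Fintype.sum_prod_type,
    mul_ite, ite_mul, mul_zero, zero_mul, mul_one, one_mul, Finset.sum_ite_eq,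
    Finset.sum_ite_eq', Finset.mem_univ, if_true]
  by_cases h : p.2.2 = q.2.2 <;> simp [h] <;> ring

theorem traceFst_extMeas (H : Matrix (Fin dS × Fin dR) (Fin dS × Fin dR) ℂ) :
    (extMeas dS dD dR H).traceFst = (1 : Matrix (Fin dD) (Fin dD) ℂ) ⊗ₖ H.traceFst := by
  ext x y
  simp [traceFst, extMeas, one_apply, mul_comm]

theorem hasDerivAt_extAnsatz_apply {U : ℝ → Matrix (Fin dS × Fin dD) (Fin dS × Fin dD) ℂ}
    {U' : Matrix (Fin dS × Fin dD) (Fin dS × Fin dD) ℂ} {θ₀ : ℝ}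
    (hU' : ∀ i j, HasDerivAt (fun θ => U θ i j) (U' i j) θ₀) (a b : Fin dS × Fin dD × Fin dR) :
    HasDerivAt (fun θ => extAnsatz dS dD dR (U θ) a b) (extAnsatz dS dD dR U' a b) θ₀ :=
  (hU' _ _).mul_const _

end Extensions

theorem average_generalized_cost_gradient_vanishes_general
    (dS : ℕ) (dD dR : ℕ)
    (μ : Measure (Matrix.unitaryGroup (Fin dS) ℂ)) [μ.IsHaarMeasure] [IsProbabilityMeasure μ]
    (k : ℕ) (p : Fin k → ℝ)
    (Ψ : Fin k → (Fin dS × Fin dD × Fin dR → ℂ))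
    (H : Fin k → Matrix (Fin dS × Fin dR) (Fin dS × Fin dR) ℂ)
    (θ₀ : ℝ)
    (U : ℝ → Matrix (Fin dS × Fin dD) (Fin dS × Fin dD) ℂ)
    (hU : ∀ θ, U θ ∈ Matrix.unitaryGroup (Fin dS × Fin dD) ℂ)
    (U' : Matrix (Fin dS × Fin dD) (Fin dS × Fin dD) ℂ)
    (hU' : ∀ i j, HasDerivAt (fun θ => U θ i j) (U' i j) θ₀)
    (g : Matrix.unitaryGroup (Fin dS) ℂ → ℂ)
    (hg : ∀ V : Matrix.unitaryGroup (Fin dS) ℂ,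
      HasDerivAt
        (fun θ => ∑ i, (p i : ℂ) *
          (star (Ψ i) ⬝ᵥ
            ((extAnsatz dS dD dR (U θ))ᴴ *
              ((V : Matrix (Fin dS) (Fin dS) ℂ) ⊗ₖ
                (1 : Matrix (Fin dD × Fin dR) (Fin dD × Fin dR) ℂ)) *
              extMeas dS dD dR (H i) *
              ((V : Matrix (Fin dS) (Fin dS) ℂ) ⊗ₖ
                (1 : Matrix (Fin dD × Fin dR) (Fin dD × Fin dR) ℂ))ᴴ *
              extAnsatz dS dD dR (U θ)) *ᵥ Ψ i))
        (g V) θ₀) :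
    ∫ V : Matrix.unitaryGroup (Fin dS) ℂ, g V ∂μ = 0 := by
  let Ũ := extAnsatz dS dD dR (U θ₀)
  let Ũ' := extAnsatz dS dD dR U'
  let M (i : Fin k) (V : Matrix.unitaryGroup (Fin dS) ℂ) :
      Matrix (Fin dS × Fin dD × Fin dR) (Fin dS × Fin dD × Fin dR) ℂ :=
    ((V : Matrix (Fin dS) (Fin dS) ℂ) ⊗ₖ (1 : Matrix (Fin dD × Fin dR) (Fin dD × Fin dR) ℂ)) *
      extMeas dS dD dR (H i) *
      ((V : Matrix (Fin dS) (Fin dS) ℂ) ⊗ₖ (1 : Matrix (Fin dD × Fin dR) (Fin dD × Fin dR) ℂ))ᴴ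
  have hg_eq (V) : g V = ∑ i, (p i : ℂ) * (star (Ũ' *ᵥ Ψ i) ⬝ᵥ (M i V *ᵥ (Ũ *ᵥ Ψ i)) +
      star (Ũ *ᵥ Ψ i) ⬝ᵥ (M i V *ᵥ (Ũ' *ᵥ Ψ i))) := by
    refine (hg V).unique ?_
    simpa only [M, Matrix.mul_assoc] using HasDerivAt.fun_sum (u := Finset.univ) fun i _ =>
      (hasDerivAt_star_dotProduct_conjTranspose_mul_mul_mulVec
        (hasDerivAt_extAnsatz_apply hU') (M i V) (Ψ i)).const_mul (p i : ℂ)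
  have hskew : Ũ'ᴴ * Ũ + Ũᴴ * Ũ' = 0 := by
    simp only [Ũ, Ũ', extAnsatz_conjTranspose, ← extAnsatz_mul, ← extAnsatz_add,
      conjTranspose_mul_add_conjTranspose_mul_eq_zero hU hU', extAnsatz_zero]
  have hcomm (i : Fin k) (A : Matrix (Fin dS × Fin dD) (Fin dS × Fin dD) ℂ) :
      Commute (haarTwirl μ (extMeas dS dD dR (H i))) (extAnsatz dS dD dR A) := by
    rw [haarTwirl_eq, traceFst_extMeas]
    exact (commute_extAnsatz_one_kronecker_one_kronecker A _).symm.smul_left _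
  have hint (i : Fin k) (u v : Fin dS × Fin dD × Fin dR → ℂ) :
      Integrable (fun V => u ⬝ᵥ (M i V *ᵥ v)) μ :=
    integrable_dotProduct_kronecker_one_mul_mul_conjTranspose_mulVec μ _ u v
  rw [integral_congr_ae (ae_of_all _ hg_eq),
    integral_finsetSum _ fun i _ => ((hint i _ _).fun_add (hint i _ _)).const_mul _]
  refine Finset.sum_eq_zero fun i _ => ?_
  rw [integral_const_mul, integral_add (hint i _ _) (hint i _ _),
    integral_dotProduct_kronecker_one_mul_mul_conjTranspose_mulVec,
    integral_dotProduct_kronecker_one_mul_mul_conjTranspose_mulVec,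
    star_mulVec_dotProduct_mulVec_add_eq_zero (hcomm i _) (hcomm i _) hskew, mul_zero]

/-- **Proposition 2 (vanishing average gradient of the generalized cost).** With training data
`{Ψ_i, H_i}` on `ℂ^{d_S} ⊗ ℂ^{d_D} ⊗ ℂ^{d_R}` (weights `p_i ≥ 0`, `Σ p_i = 1`, unit vectors
`Ψ_i`, Hermitian `H_i` on `S ⊗ R`), a dilated ansatz `θ ↦ U(θ)` (unitary on `S ⊗ D`,
entrywise differentiable at `θ₀`), target `Ṽ = V ⊗ I ⊗ I`, and generalized cost
`C_gen(θ,V) = Σ_i p_i ⟨Ψ_i, Ũ(θ)ᴴ Ṽ H̃_i Ṽᴴ Ũ(θ) Ψ_i⟩` with gradient `g V` at `θ₀`: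
the Haar average of the gradient vanishes, `∫ g V dμ(V) = 0`. -/
theorem average_generalized_cost_gradient_vanishes
    (n : ℕ) (hn : 1 ≤ n) (dS : ℕ) (hdS : dS = 2 ^ n) (dD dR : ℕ) (hdD : 1 ≤ dD) (hdR : 1 ≤ dR)
    (μ : Measure (Matrix.unitaryGroup (Fin dS) ℂ)) [μ.IsHaarMeasure] [IsProbabilityMeasure μ]
    (k : ℕ) (p : Fin k → ℝ) (hp : ∀ i, 0 ≤ p i) (hpsum : ∑ i, p i = 1)
    (Ψ : Fin k → (Fin dS × Fin dD × Fin dR → ℂ)) (hΨ : ∀ i, star (Ψ i) ⬝ᵥ Ψ i = 1)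
    (H : Fin k → Matrix (Fin dS × Fin dR) (Fin dS × Fin dR) ℂ) (hH : ∀ i, (H i).IsHermitian)
    (θ₀ : ℝ)
    (U : ℝ → Matrix (Fin dS × Fin dD) (Fin dS × Fin dD) ℂ)
    (hU : ∀ θ, U θ ∈ Matrix.unitaryGroup (Fin dS × Fin dD) ℂ)
    (U' : Matrix (Fin dS × Fin dD) (Fin dS × Fin dD) ℂ)
    (hU' : ∀ i j, HasDerivAt (fun θ => U θ i j) (U' i j) θ₀)
    (g : Matrix.unitaryGroup (Fin dS) ℂ → ℂ)
    (hg : ∀ V : Matrix.unitaryGroup (Fin dS) ℂ,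
      HasDerivAt
        (fun θ => ∑ i, (p i : ℂ) *
          (star (Ψ i) ⬝ᵥ
            ((extAnsatz dS dD dR (U θ))ᴴ *
              ((V : Matrix (Fin dS) (Fin dS) ℂ) ⊗ₖ
                (1 : Matrix (Fin dD × Fin dR) (Fin dD × Fin dR) ℂ)) *
              extMeas dS dD dR (H i) *
              ((V : Matrix (Fin dS) (Fin dS) ℂ) ⊗ₖ
                (1 : Matrix (Fin dD × Fin dR) (Fin dD × Fin dR) ℂ))ᴴ *
              extAnsatz dS dD dR (U θ)) *ᵥ Ψ i))
        (g V) θ₀) :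
    ∫ V : Matrix.unitaryGroup (Fin dS) ℂ, g V ∂μ = 0 :=
  average_generalized_cost_gradient_vanishes_general dS dD dR μ k p Ψ H θ₀ U hU U' hU' g hg
end
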